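/- arXiv:1311.6429 — 4 statements merged into one kernel-verified Lean document; each statement's English description precedes it below -/
import Mathlib

section
/- Let (V₁, ω₁), (V₂, ω₂), (V₃, ω₃) be finite-dimensional symplectic vector spaces over a field k. Let L₁₂ ⊆ V₁ × V₂ be a Lagrangian subspace for the form ω₁ ⊖ ω₂ and L₂₃ ⊆ V₂ × V₃ a Lagrangian subspace for ω₂ ⊖ ω₃. Then the composed relation L₂₃ ∘ L₁₂ := { (x, z) ∈ V₁ × V₃ : ∃ y ∈ V₂, (x, y) ∈ L₁₂ and (y, z) ∈ L₂₃ } is a Lagrangian subspace of (V₁ × V₃, ω₁ ⊖ ω₃). (This is the linear-algebraic content, at the level of tangent complexes, of the paper's Theorem 1.8 that Lagrangian correspondences between shifted symplectic stacks compose: the fiber product L₁ ×_Y L₂ of Lagrangian correspondences X ← L₁ → Y and Y ← L₂ → Z is a Lagrangian correspondence between X and Z.) -/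
/-!
Isotropy of `L₂₃ ∘ L₁₂` is a direct computation: for composable pairs the middle terms
`ω₂(y', y)` cancel. Coisotropy is linear symplectic reduction. In
`E = (V₁ × V₂) × (V₂ × V₃)` with the form `(ω₁ ⊖ ω₂) ⊕ (ω₂ ⊖ ω₃)`, the product
`Λ = L₁₂ × L₂₃` is coisotropic and the orthogonal `C` of `D = {((0, y), (y, 0))}` consists of the
points agreeing in the middle. If `(x, z)` is orthogonal to `L₂₃ ∘ L₁₂`, then `((x, 0), (0, z))`
is orthogonal to `Λ ∩ C`, so it lies in `(Λ ∩ C)^⊥ = Λ^⊥ + D ⊆ Λ + D`; writing it as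
`((x, -y), (-y, z)) + ((0, y), (y, 0))` exhibits `-y` as a middle point joining `x` to `z`.
-/

open LinearMap (BilinForm)

/-- The difference form `ω_V ⊖ ω_W` on `V × W`, given by
`(ω_V ⊖ ω_W)((x,y),(x',y')) = ω_V(x,x') − ω_W(y,y')`. -/
noncomputable def diffForm {k : Type*} [Field k]
    {V W : Type*} [AddCommGroup V] [Module k V] [AddCommGroup W] [Module k W]
    (ωV : BilinForm k V) (ωW : BilinForm k W) : BilinForm k (V × W) :=
  ωV.compl₁₂ (LinearMap.fst k V W) (LinearMap.fst k V W) -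
    ωW.compl₁₂ (LinearMap.snd k V W) (LinearMap.snd k V W)

/-- A subspace is Lagrangian if it equals its own orthogonal complement with respect to the
symplectic form. -/
def IsLagrangian {k : Type*} [Field k]
    {V : Type*} [AddCommGroup V] [Module k V]
    (ω : BilinForm k V) (L : Submodule k V) : Prop :=
  ω.orthogonal L = L

/-- The composition of linear relations
`L₂₃ ∘ L₁₂ = { (x, z) : ∃ y, (x, y) ∈ L₁₂ ∧ (y, z) ∈ L₂₃ }` as a subspace of `V₁ × V₃`. -/
def relComp {k : Type*} [Field k]
    {V₁ V₂ V₃ : Type*} [AddCommGroup V₁] [Module k V₁] [AddCommGroup V₂] [Module k V₂]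
    [AddCommGroup V₃] [Module k V₃]
    (L₁₂ : Submodule k (V₁ × V₂)) (L₂₃ : Submodule k (V₂ × V₃)) :
    Submodule k (V₁ × V₃) where
  carrier := {p | ∃ y : V₂, (p.1, y) ∈ L₁₂ ∧ (y, p.2) ∈ L₂₃}
  zero_mem' := ⟨0, by exact L₁₂.zero_mem, by exact L₂₃.zero_mem⟩
  add_mem' := by
    rintro p q ⟨y, h1, h2⟩ ⟨y', h1', h2'⟩
    exact ⟨y + y', by simpa [Prod.mk_add_mk] using L₁₂.add_mem h1 h1',
      by simpa [Prod.mk_add_mk] using L₂₃.add_mem h2 h2'⟩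
  smul_mem' := by
    rintro c p ⟨y, h1, h2⟩
    exact ⟨c • y, by simpa [Prod.smul_mk] using L₁₂.smul_mem c h1,
      by simpa [Prod.smul_mk] using L₂₃.smul_mem c h2⟩

open LinearMap.BilinForm

namespace LinearMap.BilinForm

section CommRing

variable {R M : Type*} [CommRing R] [AddCommGroup M] [Module R M] {B : BilinForm R M}

lemma orthogonal_sup (U W : Submodule R M) :
    B.orthogonal (U ⊔ W) = B.orthogonal U ⊓ B.orthogonal W := by
  refine le_antisymm (le_inf (orthogonal_le le_sup_left) (orthogonal_le le_sup_right)) ?_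
  rintro x ⟨hU, hW⟩ n hn
  obtain ⟨u, hu, w, hw, rfl⟩ := Submodule.mem_sup.mp hn
  simp [hU u hu, hW w hw]

@[simp]
lemma orthogonal_neg (N : Submodule R M) : (-B).orthogonal N = B.orthogonal N := by
  ext
  simp

lemma Nondegenerate.neg (hB : B.Nondegenerate) : (-B).Nondegenerate :=
  ⟨fun x hx => hB.1 x (by simpa using hx), fun y hy => hB.2 y (by simpa using hy)⟩

end CommRing

variable {K V : Type*} [Field K] [AddCommGroup V] [Module K V] [FiniteDimensional K V]
  {B : BilinForm K V}

lemma orthogonal_inf (hB : B.Nondegenerate) (hB₀ : B.IsRefl) (U W : Submodule K V) :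
    B.orthogonal (U ⊓ W) = B.orthogonal U ⊔ B.orthogonal W := by
  rw [← orthogonal_orthogonal hB hB₀ (_ ⊔ _), orthogonal_sup, orthogonal_orthogonal hB hB₀,
    orthogonal_orthogonal hB hB₀]

end LinearMap.BilinForm

section DifferenceForm

variable {k V W : Type*} [Field k] [AddCommGroup V] [Module k V] [AddCommGroup W] [Module k W]
  {ωV : BilinForm k V} {ωW : BilinForm k W}

@[simp]
lemma diffForm_apply (ωV : BilinForm k V) (ωW : BilinForm k W) (p q : V × W) :
    diffForm ωV ωW p q = ωV p.1 q.1 - ωW p.2 q.2 := by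
  simp [diffForm]

lemma diffForm_isAlt (hV : ωV.IsAlt) (hW : ωW.IsAlt) : (diffForm ωV ωW).IsAlt := fun p => by
  simp [hV p.1, hW p.2]

lemma diffForm_nondegenerate (hV : ωV.Nondegenerate) (hW : ωW.Nondegenerate) :
    (diffForm ωV ωW).Nondegenerate := by
  refine ⟨fun p hp => Prod.ext ?_ ?_, fun p hp => Prod.ext ?_ ?_⟩
  · exact hV.1 _ fun v => by simpa using hp (v, 0)
  · exact hW.1 _ fun w => by simpa using hp (0, w)
  · exact hV.2 _ fun v => by simpa using hp (v, 0)
  · exact hW.2 _ fun w => by simpa using hp (0, w)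

lemma diffForm_orthogonal_prod (U : Submodule k V) (U' : Submodule k W) :
    (diffForm ωV ωW).orthogonal (U.prod U') = (ωV.orthogonal U).prod (ωW.orthogonal U') := by
  ext ⟨x, y⟩
  simp only [mem_orthogonal_iff, Submodule.mem_prod, Prod.forall, diffForm_apply, and_imp]
  refine ⟨fun h => ⟨fun u hu => ?_, fun u' hu' => ?_⟩, fun ⟨hx, hy⟩ u u' hu hu' => ?_⟩
  · simpa using h u 0 hu (zero_mem _)
  · simpa using h 0 u' (zero_mem _) hu'
  · simp [hx u hu, hy u' hu']

end DifferenceForm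

section Composition

variable {k V₁ V₂ V₃ : Type*} [Field k] [AddCommGroup V₁] [Module k V₁]
  [AddCommGroup V₂] [Module k V₂] [AddCommGroup V₃] [Module k V₃]
  {ω₁ : BilinForm k V₁} {ω₂ : BilinForm k V₂} {ω₃ : BilinForm k V₃}
  {L₁₂ : Submodule k (V₁ × V₂)} {L₂₃ : Submodule k (V₂ × V₃)}

lemma relComp_le_orthogonal (h₁₂ : L₁₂ ≤ (diffForm ω₁ ω₂).orthogonal L₁₂)
    (h₂₃ : L₂₃ ≤ (diffForm ω₂ ω₃).orthogonal L₂₃) :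
    relComp L₁₂ L₂₃ ≤ (diffForm ω₁ ω₃).orthogonal (relComp L₁₂ L₂₃) := by
  rintro ⟨x, z⟩ ⟨y, hxy, hyz⟩ ⟨x', z'⟩ ⟨y', hxy', hyz'⟩
  have e₁₂ : ω₁ x' x - ω₂ y' y = 0 := by simpa using h₁₂ hxy (x', y') hxy'
  have e₂₃ : ω₂ y' y - ω₃ z' z = 0 := by simpa using h₂₃ hyz (y', z') hyz'
  calc diffForm ω₁ ω₃ (x', z') (x, z) = (ω₁ x' x - ω₂ y' y) + (ω₂ y' y - ω₃ z' z) := by simp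
    _ = 0 := by rw [e₁₂, e₂₃, add_zero]

variable (k V₁ V₂ V₃) in
def middleDiagonal : Submodule k ((V₁ × V₂) × (V₂ × V₃)) :=
  LinearMap.range ((LinearMap.inr k V₁ V₂).prod (LinearMap.inl k V₂ V₃))

lemma eq_of_mem_orthogonal_middleDiagonal (h₂ : ω₂.Nondegenerate)
    {v : (V₁ × V₂) × (V₂ × V₃)}
    (hv : v ∈ (diffForm (diffForm ω₁ ω₂) (-diffForm ω₂ ω₃)).orthogonal
      (middleDiagonal k V₁ V₂ V₃)) :
    v.1.2 = v.2.1 := by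
  refine (sub_eq_zero.mp (h₂.2 _ fun y => ?_)).symm
  simpa [neg_add_eq_sub] using hv _ ⟨y, rfl⟩

lemma orthogonal_relComp_le [FiniteDimensional k V₁] [FiniteDimensional k V₂]
    [FiniteDimensional k V₃] (a₁ : ω₁.IsAlt) (h₁ : ω₁.Nondegenerate) (a₂ : ω₂.IsAlt)
    (h₂ : ω₂.Nondegenerate) (a₃ : ω₃.IsAlt) (h₃ : ω₃.Nondegenerate)
    (h₁₂ : (diffForm ω₁ ω₂).orthogonal L₁₂ ≤ L₁₂) (h₂₃ : (diffForm ω₂ ω₃).orthogonal L₂₃ ≤ L₂₃) :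
    (diffForm ω₁ ω₃).orthogonal (relComp L₁₂ L₂₃) ≤ relComp L₁₂ L₂₃ := by
  rintro ⟨x, z⟩ hxz
  -- the form `(ω₁ ⊖ ω₂) ⊕ (ω₂ ⊖ ω₃)` on `(V₁ × V₂) × (V₂ × V₃)`, written as a difference form
  set Ω := diffForm (diffForm ω₁ ω₂) (-diffForm ω₂ ω₃)
  have hΩ : Ω.Nondegenerate :=
    diffForm_nondegenerate (diffForm_nondegenerate h₁ h₂) (diffForm_nondegenerate h₂ h₃).neg
  have hΩ₀ : Ω.IsRefl := (diffForm_isAlt (diffForm_isAlt a₁ a₂) (diffForm_isAlt a₂ a₃).neg).isRefl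
  have hperp : ((x, 0), (0, z)) ∈
      Ω.orthogonal (L₁₂.prod L₂₃ ⊓ Ω.orthogonal (middleDiagonal k V₁ V₂ V₃)) := by
    rintro ⟨⟨a, b⟩, ⟨b', c⟩⟩ ⟨⟨hab, hbc⟩, hD⟩
    obtain rfl : b = b' := eq_of_mem_orthogonal_middleDiagonal h₂ hD
    simpa [Ω] using hxz (a, c) ⟨b, hab, hbc⟩
  rw [orthogonal_inf hΩ hΩ₀, orthogonal_orthogonal hΩ hΩ₀, diffForm_orthogonal_prod,
    orthogonal_neg] at hperp
  obtain ⟨l, ⟨hl₁, hl₂⟩, _, ⟨y, rfl⟩, hsum⟩ := Submodule.mem_sup.mp hperp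
  obtain rfl : l = ((x, -y), (-y, z)) := by
    rw [eq_sub_of_add_eq hsum]
    simp
  exact ⟨-y, h₁₂ hl₁, h₂₃ hl₂⟩

end Composition

/-- Given symplectic vector spaces `(V₁,ω₁)`, `(V₂,ω₂)`, `(V₃,ω₃)`, a
Lagrangian subspace `L₁₂ ⊆ V₁ × V₂` for `ω₁ ⊖ ω₂` and a Lagrangian subspace
`L₂₃ ⊆ V₂ × V₃` for `ω₂ ⊖ ω₃`, the composed relation `L₂₃ ∘ L₁₂` is a Lagrangian subspace
of `(V₁ × V₃, ω₁ ⊖ ω₃)`. -/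
theorem stmt_4 {k : Type*} [Field k]
    {V₁ V₂ V₃ : Type*}
    [AddCommGroup V₁] [Module k V₁] [FiniteDimensional k V₁]
    [AddCommGroup V₂] [Module k V₂] [FiniteDimensional k V₂]
    [AddCommGroup V₃] [Module k V₃] [FiniteDimensional k V₃]
    (ω₁ : BilinForm k V₁) (ω₂ : BilinForm k V₂) (ω₃ : BilinForm k V₃)
    (h₁alt : ω₁.IsAlt) (h₁nd : ω₁.Nondegenerate)
    (h₂alt : ω₂.IsAlt) (h₂nd : ω₂.Nondegenerate)
    (h₃alt : ω₃.IsAlt) (h₃nd : ω₃.Nondegenerate)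
    (L₁₂ : Submodule k (V₁ × V₂)) (L₂₃ : Submodule k (V₂ × V₃))
    (hL₁₂ : IsLagrangian (diffForm ω₁ ω₂) L₁₂)
    (hL₂₃ : IsLagrangian (diffForm ω₂ ω₃) L₂₃) :
    IsLagrangian (diffForm ω₁ ω₃) (relComp L₁₂ L₂₃) :=
  le_antisymm
    (orthogonal_relComp_le h₁alt h₁nd h₂alt h₂nd h₃alt h₃nd hL₁₂.le hL₂₃.le)
    (relComp_le_orthogonal hL₁₂.ge hL₂₃.ge)
end

section
/- Let k be a field of characteristic zero and n ≥ 1. For invertible n×n matrices a, b over k and n×n matrices ξ₁, ξ₂, η₁, η₂, define φ_{a,b}((ξ₁,η₁),(ξ₂,η₂)) := −½·(tr(a⁻¹ξ₁η₂b⁻¹) − tr(a⁻¹ξ₂η₁b⁻¹)). Then for all invertible a, b, c and all matrices ξᵢ, ηᵢ, ζᵢ (i = 1, 2): φ_{a,bc}((ξ₁, η₁c + bζ₁),(ξ₂, η₂c + bζ₂)) + φ_{b,c}((η₁,ζ₁),(η₂,ζ₂)) = φ_{ab,c}((ξ₁b + aη₁, ζ₁),(ξ₂b + aη₂, ζ₂))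 + φ_{a,b}((ξ₁,η₁),(ξ₂,η₂)). (This is the associativity (cocycle) condition m₂₃*φ + p₂₃*φ = m₁₂*φ + p₁₂*φ for the two-form φ = −½(p₁*θ, p₂*θ̄) on G × G defining the multiplicative Ω²-torsor on G = GL_n, spelled out pointwise using the left Maurer–Cartan form θ_a(ξ) = a⁻¹ξ, the right Maurer–Cartan form θ̄_b(η) = ηb⁻¹, the trace pairing, and the differential of multiplication (ξ, η) ↦ ξb + aη.) -/
/-!
Write `φ_{a,b}` as minus one half of the antisymmetrisation of the pairing
`tr(a⁻¹ x y b⁻¹) = (θ_a x, θ̄_b y)`. Expanding both sides of the cocycle identity by bilinearity, the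
terms match in pairs: cyclicity of the trace moves `b` from the right Maurer–Cartan factor to the
left one, and the remaining terms only see `c c⁻¹ = 1` and `a⁻¹ a = 1`.
-/

open Matrix

/-- The two-form `φ_{a,b}` on `GL_n × GL_n` evaluated on tangent vectors `(ξ₁,η₁)`, `(ξ₂,η₂)`:
`φ_{a,b}((ξ₁,η₁),(ξ₂,η₂)) = −½·(tr(a⁻¹ξ₁η₂b⁻¹) − tr(a⁻¹ξ₂η₁b⁻¹))`. -/
noncomputable def phiForm {k : Type*} [Field k] {n : ℕ}
    (a b ξ₁ η₁ ξ₂ η₂ : Matrix (Fin n) (Fin n) k) : k :=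
  -(1 / 2 : k) * (trace (a⁻¹ * ξ₁ * η₂ * b⁻¹) - trace (a⁻¹ * ξ₂ * η₁ * b⁻¹))

namespace Matrix

variable {m R : Type*} [Fintype m] [DecidableEq m] [CommRing R]

/-- `(θ_a x, θ̄_b y)`, the trace pairing of the left Maurer–Cartan form at `a` and the right one
at `b`. -/
noncomputable def mcPairing (a b x y : Matrix m m R) : R :=
  trace (a⁻¹ * x * y * b⁻¹)

theorem mcPairing_add_left (a b x x' y : Matrix m m R) :
    mcPairing a b (x + x') y = mcPairing a b x y + mcPairing a b x' y := by
  simp only [mcPairing, Matrix.mul_add, Matrix.add_mul, trace_add]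

theorem mcPairing_add_right (a b x y y' : Matrix m m R) :
    mcPairing a b x (y + y') = mcPairing a b x y + mcPairing a b x y' := by
  simp only [mcPairing, Matrix.mul_add, Matrix.add_mul, trace_add]

theorem mcPairing_mul_mul (a b c x y : Matrix m m R) :
    mcPairing a (b * c) x (b * y) = mcPairing (a * b) c (x * b) y := by
  simp only [mcPairing, Matrix.mul_inv_rev, ← Matrix.mul_assoc]
  rw [trace_mul_comm]
  simp only [Matrix.mul_assoc]

theorem mcPairing_mul_right_cancel {c : Matrix m m R} (hc : IsUnit c) (a b x y : Matrix m m R) :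
    mcPairing a (b * c) x (y * c) = mcPairing a b x y := by
  simp only [mcPairing, Matrix.mul_inv_rev, ← Matrix.mul_assoc,
    mul_nonsing_inv_cancel_right _ _ ((isUnit_iff_isUnit_det c).mp hc)]

theorem mcPairing_mul_left_cancel {a : Matrix m m R} (ha : IsUnit a) (b c x y : Matrix m m R) :
    mcPairing (a * b) c (a * x) y = mcPairing b c x y := by
  simp only [mcPairing, Matrix.mul_inv_rev, Matrix.mul_assoc,
    nonsing_inv_mul_cancel_left _ _ ((isUnit_iff_isUnit_det a).mp ha)]

end Matrix

theorem phiForm_eq_mcPairing {k : Type*} [Field k] {n : ℕ}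
    (a b ξ₁ η₁ ξ₂ η₂ : Matrix (Fin n) (Fin n) k) :
    phiForm a b ξ₁ η₁ ξ₂ η₂ = -(1 / 2 : k) * (mcPairing a b ξ₁ η₂ - mcPairing a b ξ₂ η₁) :=
  rfl

theorem stmt_5_general {k : Type*} [Field k] {n : ℕ}
    (a b c : Matrix (Fin n) (Fin n) k)
    (ha : IsUnit a) (hc : IsUnit c)
    (ξ₁ ξ₂ η₁ η₂ ζ₁ ζ₂ : Matrix (Fin n) (Fin n) k) :
    phiForm a (b * c) ξ₁ (η₁ * c + b * ζ₁) ξ₂ (η₂ * c + b * ζ₂)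
        + phiForm b c η₁ ζ₁ η₂ ζ₂
      = phiForm (a * b) c (ξ₁ * b + a * η₁) ζ₁ (ξ₂ * b + a * η₂) ζ₂
        + phiForm a b ξ₁ η₁ ξ₂ η₂ := by
  simp only [phiForm_eq_mcPairing, mcPairing_add_left, mcPairing_add_right, mcPairing_mul_mul,
    mcPairing_mul_right_cancel hc, mcPairing_mul_left_cancel ha]
  ring

/-- the associativity (cocycle) condition
`m₂₃*φ + p₂₃*φ = m₁₂*φ + p₁₂*φ` for the two-form `φ = −½(p₁*θ, p₂*θ̄)` on `G × G`,
`G = GL_n`, spelled out pointwise. -/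
theorem stmt_5 {k : Type*} [Field k] [CharZero k] {n : ℕ} (hn : 1 ≤ n)
    (a b c : Matrix (Fin n) (Fin n) k)
    (ha : IsUnit a) (hb : IsUnit b) (hc : IsUnit c)
    (ξ₁ ξ₂ η₁ η₂ ζ₁ ζ₂ : Matrix (Fin n) (Fin n) k) :
    phiForm a (b * c) ξ₁ (η₁ * c + b * ζ₁) ξ₂ (η₂ * c + b * ζ₂)
        + phiForm b c η₁ ζ₁ η₂ ζ₂
      = phiForm (a * b) c (ξ₁ * b + a * η₁) ζ₁ (ξ₂ * b + a * η₂) ζ₂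
        + phiForm a b ξ₁ η₁ ξ₂ η₂ :=
  stmt_5_general a b c ha hc ξ₁ ξ₂ η₁ η₂ ζ₁ ζ₂
end

section
/- Let g be a Lie algebra over k, B a symmetric invariant bilinear form on g, and A a Lie algebra automorphism of g that is B-orthogonal. Define the alternating trilinear form C(u,v,w) := B(u, [v,w]). Then for all x₁, x₂, x₃, y₁, y₂, y₃ ∈ g: C(Ax₁ + y₁, Ax₂ + y₂, Ax₃ + y₃) = C(x₁,x₂,x₃) + C(y₁,y₂,y₃) + B([x₁,x₂], A⁻¹y₃) − B([x₁,x₃], A⁻¹y₂) + B([x₂,x₃], A⁻¹y₁) + B(Ax₁, [y₂,y₃]) − B(Ax₂, [y₁,y₃]) + B(Ax₃, [y₁,y₂]). (This expansion is the algebraic content of the paper's Lemma 3.2 that the Cartan three-form ω₁ = (1/12)(θ,[θ,θ]) is a multiplicative section of the multiplicative Ω²-torsor defined by −φ, i.e. m*ω₁ + d_dR φ = p₁*ω₁ + p₂*ω₁, using m*θ = Ad_b p₁*θ + p₂*θ and d_dR φ = ¼(p₁*[θ,θ], p₂*θ̄) + ¼(p₁*θ, p₂*[θ̄,θ̄]).)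 -/
/-! Expand trilinearly into eight terms. Invariance and symmetry make `B u ⁅v, w⁆` cyclically
symmetric and skew in `v, w`, so every mixed term can be rotated into the shape
`B (A a) ⁅A b, c⁆ = B (A ⁅a, b⁆) c`, where orthogonality moves `A` across as `A⁻¹`. -/

section InvariantForm

variable {R L : Type*} [CommRing R] [LieRing L] [LieAlgebra R L] {B : L →ₗ[R] L →ₗ[R] R}

theorem bilin_lie_cyclic (hsymm : ∀ x y : L, B x y = B y x)
    (hinv : ∀ x y z : L, B ⁅x, y⁆ z = B x ⁅y, z⁆) (u v w : L) :
    B u ⁅v, w⁆ = B v ⁅w, u⁆ := by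
  rw [hsymm, hinv]

theorem bilin_lie_swap (u v w : L) : B u ⁅v, w⁆ = -B u ⁅w, v⁆ := by
  rw [← lie_skew, map_neg]

theorem bilin_apply_lie_apply_eq_bilin_lie_symm_apply
    (hinv : ∀ x y z : L, B ⁅x, y⁆ z = B x ⁅y, z⁆) {A : L ≃ₗ[R] L}
    (horth : ∀ x y : L, B (A x) (A y) = B x y) (hlie : ∀ x y : L, A ⁅x, y⁆ = ⁅A x, A y⁆)
    (a b c : L) : B (A a) ⁅A b, c⁆ = B ⁅a, b⁆ (A.symm c) :=
  calc B (A a) ⁅A b, c⁆ = B ⁅A a, A b⁆ c := (hinv _ _ _).symm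
    _ = B (A ⁅a, b⁆) (A (A.symm c)) := by rw [hlie, A.apply_symm_apply]
    _ = B ⁅a, b⁆ (A.symm c) := horth _ _

end InvariantForm

theorem stmt_6_general {k : Type*} [Field k]
    {g : Type*} [LieRing g] [LieAlgebra k g]
    (B : g →ₗ[k] g →ₗ[k] k)
    (hsymm : ∀ x y : g, B x y = B y x)
    (hinv : ∀ x y z : g, B ⁅x, y⁆ z = B x ⁅y, z⁆)
    (A : g ≃ₗ[k] g)
    (horth : ∀ x y : g, B (A x) (A y) = B x y)
    (hlie : ∀ x y : g, A ⁅x, y⁆ = ⁅A x, A y⁆) :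
    ∀ x₁ x₂ x₃ y₁ y₂ y₃ : g,
      B (A x₁ + y₁) ⁅A x₂ + y₂, A x₃ + y₃⁆
        = B x₁ ⁅x₂, x₃⁆ + B y₁ ⁅y₂, y₃⁆
          + B ⁅x₁, x₂⁆ (A.symm y₃) - B ⁅x₁, x₃⁆ (A.symm y₂) + B ⁅x₂, x₃⁆ (A.symm y₁)
          + B (A x₁) ⁅y₂, y₃⁆ - B (A x₂) ⁅y₁, y₃⁆ + B (A x₃) ⁅y₁, y₂⁆ := by
  intro x₁ x₂ x₃ y₁ y₂ y₃
  have cyclic := bilin_lie_cyclic hsymm hinv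
  have transfer := bilin_apply_lie_apply_eq_bilin_lie_symm_apply hinv horth hlie
  have hxxx : B (A x₁) ⁅A x₂, A x₃⁆ = B x₁ ⁅x₂, x₃⁆ := by rw [← hlie, horth]
  have hxxy : B (A x₁) ⁅A x₂, y₃⁆ = B ⁅x₁, x₂⁆ (A.symm y₃) := transfer _ _ _
  have hxyx : B (A x₁) ⁅y₂, A x₃⁆ = -B ⁅x₁, x₃⁆ (A.symm y₂) := by
    rw [bilin_lie_swap, transfer]
  have hyxx : B y₁ ⁅A x₂, A x₃⁆ = B ⁅x₂, x₃⁆ (A.symm y₁) := (cyclic _ _ _).trans (transfer _ _ _)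
  have hyxy : B y₁ ⁅A x₂, y₃⁆ = -B (A x₂) ⁅y₁, y₃⁆ := (cyclic _ _ _).trans (bilin_lie_swap _ _ _)
  have hyyx : B y₁ ⁅y₂, A x₃⁆ = B (A x₃) ⁅y₁, y₂⁆ := (cyclic _ _ _).trans (cyclic _ _ _)
  simp only [lie_add, add_lie, map_add, LinearMap.add_apply]
  linear_combination hxxx + hxxy + hxyx + hyxx + hyxy + hyyx

/-- Let `g` be a Lie algebra, `B` a symmetric invariant bilinear form and `A`
a `B`-orthogonal Lie algebra automorphism. With `C(u,v,w) := B(u,[v,w])`, for all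
`x₁, x₂, x₃, y₁, y₂, y₃ ∈ g` the stated expansion of `C(Ax₁+y₁, Ax₂+y₂, Ax₃+y₃)` holds. -/
theorem stmt_6 {k : Type*} [Field k] [CharZero k]
    {g : Type*} [LieRing g] [LieAlgebra k g]
    (B : g →ₗ[k] g →ₗ[k] k)
    (hsymm : ∀ x y : g, B x y = B y x)
    (hinv : ∀ x y z : g, B ⁅x, y⁆ z = B x ⁅y, z⁆)
    (A : g ≃ₗ[k] g)
    (horth : ∀ x y : g, B (A x) (A y) = B x y)
    (hlie : ∀ x y : g, A ⁅x, y⁆ = ⁅A x, A y⁆) :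
    ∀ x₁ x₂ x₃ y₁ y₂ y₃ : g,
      B (A x₁ + y₁) ⁅A x₂ + y₂, A x₃ + y₃⁆
        = B x₁ ⁅x₂, x₃⁆ + B y₁ ⁅y₂, y₃⁆
          + B ⁅x₁, x₂⁆ (A.symm y₃) - B ⁅x₁, x₃⁆ (A.symm y₂) + B ⁅x₂, x₃⁆ (A.symm y₁)
          + B (A x₁) ⁅y₂, y₃⁆ - B (A x₂) ⁅y₁, y₃⁆ + B (A x₃) ⁅y₁, y₂⁆ :=
  stmt_6_general B hsymm hinv A horth hlie
end

section
/- Let B be a symmetric bilinear form on g, A a B-orthogonal linear automorphism of g, and s : g × g → k an alternating bilinear form satisfying s((A⁻¹ − id)v, u) = ½·B((A + id)u, v) for all u, v ∈ g. Then for all v, w ∈ g: s((A⁻¹ − id)w, (A⁻¹ − id)v) = ½·B((A − A⁻¹)w, v). (This is the paper's consequence (3) of the invariance equation for a section s of the multiplicative Ω²-torsor on [G/G]: the condition ι_{(v^R − v^L)}s = ½(θ + θ̄, v) implies ι_{(w^R − w^L)}ι_{(v^R − v^L)}s = ½(Ad_{a⁻¹}(w) − Ad_a(w), v), with A corresponding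 to the adjoint action of the group element a.) -/
/-!
Substituting `u = A⁻¹v − v` into the hypothesis gives `(A + 1)u = A⁻¹v − Av`, so the left-hand
side equals `½ B(A⁻¹v − Av, w)`. Since `B` is symmetric and `A` is `B`-orthogonal, `A − A⁻¹` is
`B`-skew, which turns this into `½ B((A − A⁻¹)w, v)`.
-/

section OrthogonalSkew

variable {k M : Type*} [CommRing k] [AddCommGroup M] [Module k M]
  {B : M →ₗ[k] M →ₗ[k] k} {A : M ≃ₗ[k] M}

lemma apply_symm_left_eq_of_orthogonal (horth : ∀ x y, B (A x) (A y) = B x y) (x y : M) :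
    B (A.symm x) y = B x (A y) := by
  rw [← horth, A.apply_symm_apply]

lemma sub_symm_skew_of_orthogonal (hsymm : ∀ x y, B x y = B y x)
    (horth : ∀ x y, B (A x) (A y) = B x y) (x y : M) :
    B (A.symm x - A x) y = B (A y - A.symm y) x := by
  have h₁ : B (A.symm x) y = B (A y) x := by
    rw [apply_symm_left_eq_of_orthogonal horth, hsymm]
  have h₂ : B (A x) y = B (A.symm y) x := by
    rw [hsymm, apply_symm_left_eq_of_orthogonal horth]
  simp only [map_sub, LinearMap.sub_apply, h₁, h₂]

end OrthogonalSkew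

lemma LinearEquiv.apply_add_self_symm_sub {k M : Type*} [Semiring k] [AddCommGroup M] [Module k M]
    (A : M ≃ₗ[k] M) (v : M) : A (A.symm v - v) + (A.symm v - v) = A.symm v - A v := by
  rw [map_sub, A.apply_symm_apply]
  abel

theorem stmt_8_general {k : Type*} [Field k]
    {g : Type*} [AddCommGroup g] [Module k g]
    (B : g →ₗ[k] g →ₗ[k] k)
    (hsymm : ∀ x y : g, B x y = B y x)
    (A : g ≃ₗ[k] g)
    (horth : ∀ x y : g, B (A x) (A y) = B x y)
    (s : g →ₗ[k] g →ₗ[k] k)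
    (hs : ∀ u v : g, s (A.symm v - v) u = (1 / 2 : k) * B (A u + u) v) :
    ∀ v w : g,
      s (A.symm w - w) (A.symm v - v) = (1 / 2 : k) * B (A w - A.symm w) v := by
  intro v w
  rw [hs, A.apply_add_self_symm_sub, sub_symm_skew_of_orthogonal hsymm horth]

/-- Let `B` be a symmetric bilinear form on `g`, `A` a `B`-orthogonal linear
automorphism, and `s` an alternating bilinear form with
`s((A⁻¹ − id)v, u) = ½·B((A + id)u, v)` for all `u, v`. Then for all `v, w`:
`s((A⁻¹ − id)w, (A⁻¹ − id)v) = ½·B((A − A⁻¹)w, v)`. -/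
theorem stmt_8 {k : Type*} [Field k] [CharZero k]
    {g : Type*} [AddCommGroup g] [Module k g] [FiniteDimensional k g]
    (B : g →ₗ[k] g →ₗ[k] k)
    (hsymm : ∀ x y : g, B x y = B y x)
    (A : g ≃ₗ[k] g)
    (horth : ∀ x y : g, B (A x) (A y) = B x y)
    (s : g →ₗ[k] g →ₗ[k] k)
    (halt : ∀ x : g, s x x = 0)
    (hs : ∀ u v : g, s (A.symm v - v) u = (1 / 2 : k) * B (A u + u) v) :
    ∀ v w : g,
      s (A.symm w - w) (A.symm v - v) = (1 / 2 : k) * B (A w - A.symm w) v :=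
  stmt_8_general B hsymm A horth s hs
end
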